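/- Let φ be a model function with constant C, t on the unit circle, K > 0, and λ in the open unit disk with φ(|t-λ|) ≤ K(1-|λ|). Then for every z in the open unit disk, φ(|t - z|/6) ≤ (2C + K)·|1 - conj(λ)·z|. -/

import Mathlib

/-!
Write `D = ‖1 - conj λ · z‖`. Both `1 - ‖λ‖` and `‖λ - z‖` are at most `D`. If `‖t - z‖ ≤ 12 D`,
the linear bound `φ x ≤ C x` already gives `φ(‖t - z‖ / 6) ≤ 2 C D`. Otherwise `λ` is far from `t`
compared to `D`: `‖t - λ‖ ≥ ‖t - z‖ - D ≥ ‖t - z‖ / 6`, and monotonicity with the hypothesis at `λ`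
gives `φ(‖t - z‖ / 6) ≤ K (1 - ‖λ‖) ≤ K D`.
-/

open Complex

theorem norm_one_sub_conj_mul_sq_sub_norm_sub_sq (l z : ℂ) :
    ‖1 - (starRingEnd ℂ) l * z‖ ^ 2 - ‖l - z‖ ^ 2 = (1 - ‖l‖ ^ 2) * (1 - ‖z‖ ^ 2) := by
  simp only [Complex.sq_norm, Complex.normSq_apply, Complex.sub_re, Complex.sub_im,
    Complex.mul_re, Complex.mul_im, Complex.one_re, Complex.one_im,
    Complex.conj_re, Complex.conj_im]
  ring

theorem norm_sub_le_norm_one_sub_conj_mul {l z : ℂ} (hl : ‖l‖ ≤ 1) (hz : ‖z‖ ≤ 1) :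
    ‖l - z‖ ≤ ‖1 - (starRingEnd ℂ) l * z‖ := by
  have hprod : 0 ≤ (1 - ‖l‖ ^ 2) * (1 - ‖z‖ ^ 2) :=
    mul_nonneg (by nlinarith [norm_nonneg l]) (by nlinarith [norm_nonneg z])
  have hsq := norm_one_sub_conj_mul_sq_sub_norm_sub_sq l z
  exact (pow_le_pow_iff_left₀ (norm_nonneg _) (norm_nonneg _) two_ne_zero).1 (by linarith)

theorem one_sub_norm_le_norm_one_sub_conj_mul (l : ℂ) {z : ℂ} (hz : ‖z‖ ≤ 1) :
    1 - ‖l‖ ≤ ‖1 - (starRingEnd ℂ) l * z‖ :=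
  calc 1 - ‖l‖ ≤ 1 - ‖(starRingEnd ℂ) l * z‖ := by
        rw [norm_mul, Complex.norm_conj]
        nlinarith [norm_nonneg l]
    _ ≤ ‖1 - (starRingEnd ℂ) l * z‖ := by simpa using norm_sub_norm_le (1 : ℂ) ((starRingEnd ℂ) l * z)

theorem vinogradov_lemma_six_general (φ : ℝ → ℝ) (C K : ℝ) (hC : 0 < C) (hK : 0 < K)
    (hmono : MonotoneOn φ (Set.Ici 0))
    (hlin : ∀ x ≥ (0:ℝ), φ x ≤ C * x)
    (t l z : ℂ) (hl : ‖l‖ < 1)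
    (hstolz : φ (‖t - l‖) ≤ K * (1 - ‖l‖))
    (hz : ‖z‖ < 1) :
    φ (‖t - z‖ / 6) ≤ (2 * C + K) * ‖1 - (starRingEnd ℂ) l * z‖ := by
  set D := ‖1 - (starRingEnd ℂ) l * z‖
  have hD : 0 ≤ D := norm_nonneg _
  have hlz : ‖l - z‖ ≤ D := norm_sub_le_norm_one_sub_conj_mul hl.le hz.le
  have h1l : 1 - ‖l‖ ≤ D := one_sub_norm_le_norm_one_sub_conj_mul l hz.le
  rcases le_or_gt ‖t - z‖ (12 * D) with hnear | hfar
  · calc φ (‖t - z‖ / 6) ≤ C * (‖t - z‖ / 6) := hlin _ (by positivity)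
      _ ≤ C * (2 * D) := by gcongr; linarith
      _ ≤ (2 * C + K) * D := by nlinarith
  · have hfar_l : ‖t - z‖ / 6 ≤ ‖t - l‖ := by
      have := norm_sub_le_norm_sub_add_norm_sub t l z
      linarith
    calc φ (‖t - z‖ / 6) ≤ φ ‖t - l‖ :=
          hmono (Set.mem_Ici.mpr (by positivity)) (Set.mem_Ici.mpr (norm_nonneg _)) hfar_l
      _ ≤ K * (1 - ‖l‖) := hstolz
      _ ≤ K * D := by gcongr
      _ ≤ (2 * C + K) * D := by nlinarith

theorem vinogradov_lemma_six (φ : ℝ → ℝ) (C K : ℝ) (hC : 0 < C) (hK : 0 < K)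
    (hpos : ∀ x ≥ (0:ℝ), 0 ≤ φ x)
    (hcont : ContinuousOn φ (Set.Ici 0))
    (hmono : MonotoneOn φ (Set.Ici 0))
    (hlin : ∀ x ≥ (0:ℝ), φ x ≤ C * x)
    (t l z : ℂ) (ht : ‖t‖ = 1) (hl : ‖l‖ < 1)
    (hstolz : φ (‖t - l‖) ≤ K * (1 - ‖l‖))
    (hz : ‖z‖ < 1) :
    φ (‖t - z‖ / 6) ≤ (2 * C + K) * ‖1 - (starRingEnd ℂ) l * z‖ :=
  vinogradov_lemma_six_general φ C K hC hK hmono hlin t l z hl hstolz hz
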